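/- Let x be a random vector in ℝ^n whose coordinates are independent Gaussian random variables, each with mean μᵢ and variance σ² > 0 (i.e. x ~ N(μ, σ²·I)), and set r = √n · σ. Then for every ε ≥ 0, P( r·√(1 − 2√ε) ≤ ‖x − μ‖ ≤ r·√(1 + 2√ε + 2ε) ) ≥ 1 − 2e^{−nε}. (When 1 − 2√ε < 0, the lower endpoint is interpreted as 0.) -/

import Mathlib

/-!
Chernoff's method with the exact moment generating function
`E exp (t ‖x - μ‖²) = (1 - 2tσ²)^(-n/2)`. Write `s = √ε` and `u = 2tσ²`. For the upper tail,
`u = 2s / (1 + 2s)` reduces the claim to `log (1 + 2s) ≤ 2s (1 + s) / (1 + 2s)`, which follows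
from `y ≤ sinh y` at `y = log √(1 + 2s)`. For the lower tail, `u = -2s / (1 - 2s)` reduces it to
`log (1 - 2s) ≤ -2s - 2s²` (the event is empty when `2s ≥ 1`). A union bound combines the two.
-/

open MeasureTheory ProbabilityTheory

/-- The isotropic Gaussian measure `N(μ, σ²·I)` on `Fin n → ℝ`: the product of `n` independent
one-dimensional Gaussians with means `μ i` and common variance `σ²`. -/
noncomputable def isoGaussian (n : ℕ) (μ : Fin n → ℝ) (σ : ℝ) : Measure (Fin n → ℝ) :=
  Measure.pi fun i => gaussianReal (μ i) ⟨σ ^ 2, sq_nonneg σ⟩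

open Real
open scoped NNReal

namespace Real

theorem log_one_add_le_div_sqrt {x : ℝ} (hx : 0 ≤ x) : log (1 + x) ≤ x / √(1 + x) := by
  have hx1 : 0 < 1 + x := by linarith
  have hexp : exp (log (1 + x) / 2) = √(1 + x) := by
    rw [sqrt_eq_rpow, rpow_def_of_pos hx1, div_eq_mul_one_div]
  have hsinh :=
    self_le_sinh_iff.mpr (div_nonneg (log_nonneg (le_add_of_nonneg_right hx)) zero_le_two)
  rw [sinh_eq, exp_neg, hexp] at hsinh
  have hsq : √(1 + x) ^ 2 = 1 + x := sq_sqrt hx1.le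
  rw [le_div_iff₀ (sqrt_pos.mpr hx1)]
  field_simp at hsinh
  nlinarith

theorem log_one_add_two_mul_le {s : ℝ} (hs : 0 ≤ s) :
    log (1 + 2 * s) ≤ 2 * s * (1 + s) / (1 + 2 * s) := by
  have h1 : 0 < 1 + 2 * s := by linarith
  have hsq := sq_sqrt h1.le
  have hsqrt_le : √(1 + 2 * s) ≤ 1 + s := sqrt_le_iff.mpr ⟨by linarith, by nlinarith⟩
  calc log (1 + 2 * s) ≤ 2 * s / √(1 + 2 * s) := log_one_add_le_div_sqrt (by positivity)
    _ = 2 * s * √(1 + 2 * s) / (1 + 2 * s) := by field_simp; rw [hsq]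
    _ ≤ 2 * s * (1 + s) / (1 + 2 * s) := by gcongr

theorem log_one_sub_le_neg_sub_sq_div_two {x : ℝ} (h0 : 0 ≤ x) (h1 : x < 1) :
    log (1 - x) ≤ -x - x ^ 2 / 2 := by
  have hseries := hasSum_pow_div_log_of_abs_lt_one (by rwa [abs_of_nonneg h0])
  have htwo_terms : ∑ i ∈ Finset.range 2, x ^ (i + 1) / (i + 1) ≤ -log (1 - x) :=
    sum_le_hasSum _ (fun i _ => by positivity) hseries
  norm_num [Finset.sum_range_succ] at htwo_terms
  linarith

end Real

theorem mgf_sq_sub_gaussianReal (m : ℝ) (v : ℝ≥0) {t : ℝ} (ht : 2 * t * v < 1) :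
    mgf (fun y => (y - m) ^ 2) (gaussianReal m v) t = (1 - 2 * t * v) ^ (-(1 / 2 : ℝ)) := by
  rcases eq_or_ne v 0 with rfl | hv
  · simp [mgf]
  have hv0 : (0 : ℝ) < v := by positivity
  have hdensity : ∀ y, gaussianPDFReal m v y * exp (t * (y - m) ^ 2)
      = (√(2 * π * v))⁻¹ * exp (-((1 - 2 * t * v) / (2 * v)) * (y - m) ^ 2) := by
    intro y
    rw [gaussianPDFReal, mul_assoc, ← exp_add]
    congr 2
    field_simp
    ring
  rw [mgf, integral_gaussianReal_eq_integral_smul hv]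
  simp_rw [smul_eq_mul, hdensity]
  rw [integral_const_mul, integral_sub_right_eq_self (fun y => exp (-_ * y ^ 2)) m,
    integral_gaussian, ← sqrt_inv, ← sqrt_mul (by positivity), sqrt_eq_rpow,
    rpow_neg (by linarith), ← inv_rpow (by linarith)]
  congr 1
  field_simp

-- The variance `⟨σ ^ 2, _⟩` in `isoGaussian` elaborates with type `{r // 0 ≤ r}`;
-- naming it as an `ℝ≥0` lets instance search and `rw` recognise it.
instance (n : ℕ) (μ : Fin n → ℝ) (σ : ℝ) : IsProbabilityMeasure (isoGaussian n μ σ) := by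
  unfold isoGaussian
  set v : ℝ≥0 := ⟨σ ^ 2, sq_nonneg σ⟩
  infer_instance

section isoGaussian

variable {n : ℕ} (μ : Fin n → ℝ)

theorem mgf_sum_sq_isoGaussian (σ : ℝ) {t : ℝ} (ht : 2 * t * σ ^ 2 < 1) :
    mgf (fun x => ∑ i, (x i - μ i) ^ 2) (isoGaussian n μ σ) t
      = (1 - 2 * t * σ ^ 2) ^ (-(n / 2 : ℝ)) := by
  have hprod : (fun x : Fin n → ℝ => exp (t * ∑ i, (x i - μ i) ^ 2))
      = fun x => ∏ i, exp (t * (x i - μ i) ^ 2) := by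
    ext x
    rw [Finset.mul_sum, exp_sum]
  rw [mgf, hprod, isoGaussian]
  set v : ℝ≥0 := ⟨σ ^ 2, sq_nonneg σ⟩
  refine (integral_fintype_prod_eq_prod (E := fun _ => ℝ)
    fun i y => exp (t * (y - μ i) ^ 2)).trans ?_
  change ∏ i, mgf (fun y => (y - μ i) ^ 2) (gaussianReal (μ i) v) t = _
  simp_rw [mgf_sq_sub_gaussianReal _ v ht, show (v : ℝ) = σ ^ 2 from rfl]
  rw [Finset.prod_const, Finset.card_univ, Fintype.card_fin, ← rpow_mul_natCast (by linarith)]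
  ring_nf

theorem integrable_exp_mul_sum_sq_isoGaussian (σ : ℝ) {t : ℝ} (ht : 2 * t * σ ^ 2 < 1) :
    Integrable (fun x => exp (t * ∑ i, (x i - μ i) ^ 2)) (isoGaussian n μ σ) := by
  rw [← mgf_pos_iff, mgf_sum_sq_isoGaussian μ σ ht]
  exact rpow_pos_of_pos (by linarith) _

variable {σ : ℝ} (hσ : σ ≠ 0)
include hσ

-- Chernoff bounds at `t = u / (2σ²)`, for thresholds `n σ² k`.

theorem exp_mul_mgf_sum_sq_isoGaussian {u : ℝ} (hu : u < 1) (k : ℝ) :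
    exp (-(u / (2 * σ ^ 2)) * (n * σ ^ 2 * k))
        * mgf (fun x => ∑ i, (x i - μ i) ^ 2) (isoGaussian n μ σ) (u / (2 * σ ^ 2))
      = exp (-(n / 2) * (u * k + log (1 - u))) := by
  have hu' : 2 * (u / (2 * σ ^ 2)) * σ ^ 2 = u := by field_simp
  rw [mgf_sum_sq_isoGaussian μ σ (by rwa [hu']), hu', rpow_def_of_pos (by linarith), ← exp_add]
  congr 1
  field_simp
  ring

theorem isoGaussian_measureReal_sum_sq_ge_le {u : ℝ} (hu₀ : 0 ≤ u) (hu₁ : u < 1) (k : ℝ) :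
    (isoGaussian n μ σ).real {x | n * σ ^ 2 * k ≤ ∑ i, (x i - μ i) ^ 2}
      ≤ exp (-(n / 2) * (u * k + log (1 - u))) := by
  have ht : 2 * (u / (2 * σ ^ 2)) * σ ^ 2 < 1 := by field_simp; linarith
  have hchernoff := measure_ge_le_exp_mul_mgf (n * σ ^ 2 * k) (by positivity)
    (integrable_exp_mul_sum_sq_isoGaussian μ σ ht)
  rwa [exp_mul_mgf_sum_sq_isoGaussian μ hσ hu₁] at hchernoff

theorem isoGaussian_measureReal_sum_sq_le_le {u : ℝ} (hu : u ≤ 0) (k : ℝ) :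
    (isoGaussian n μ σ).real {x | ∑ i, (x i - μ i) ^ 2 ≤ n * σ ^ 2 * k}
      ≤ exp (-(n / 2) * (u * k + log (1 - u))) := by
  have ht : 2 * (u / (2 * σ ^ 2)) * σ ^ 2 < 1 := by field_simp; linarith
  have hchernoff := measure_le_le_exp_mul_mgf (n * σ ^ 2 * k)
    (div_nonpos_of_nonpos_of_nonneg hu (by positivity))
    (integrable_exp_mul_sum_sq_isoGaussian μ σ ht)
  rwa [exp_mul_mgf_sum_sq_isoGaussian μ hσ (by linarith)] at hchernoff

theorem isoGaussian_measureReal_sum_sq_upper_tail {s : ℝ} (hs : 0 ≤ s) :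
    (isoGaussian n μ σ).real {x | n * σ ^ 2 * (1 + 2 * s + 2 * s ^ 2) ≤ ∑ i, (x i - μ i) ^ 2}
      ≤ exp (-(n * s ^ 2)) := by
  have h1 : 0 < 1 + 2 * s := by linarith
  refine (isoGaussian_measureReal_sum_sq_ge_le μ hσ (u := 2 * s / (1 + 2 * s)) (by positivity)
    ((div_lt_one h1).mpr (by linarith)) _).trans (exp_le_exp.mpr ?_)
  have hlog : log (1 - 2 * s / (1 + 2 * s)) = -log (1 + 2 * s) := by
    rw [← log_inv]
    congr 1
    field_simp
    ring
  have hexponent : 2 * s / (1 + 2 * s) * (1 + 2 * s + 2 * s ^ 2)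
      = 2 * s ^ 2 + 2 * s * (1 + s) / (1 + 2 * s) := by
    field_simp
    ring
  have hrate : 2 * s ^ 2 ≤ 2 * s / (1 + 2 * s) * (1 + 2 * s + 2 * s ^ 2) - log (1 + 2 * s) := by
    linarith [log_one_add_two_mul_le hs]
  rw [hlog]
  nlinarith [mul_le_mul_of_nonneg_left hrate (Nat.cast_nonneg n : (0 : ℝ) ≤ n)]

theorem isoGaussian_measureReal_sum_sq_lower_tail {s : ℝ} (hs : 0 ≤ s) :
    (isoGaussian n μ σ).real {x | ∑ i, (x i - μ i) ^ 2 < n * σ ^ 2 * (1 - 2 * s)}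
      ≤ exp (-(n * s ^ 2)) := by
  rcases le_or_gt 1 (2 * s) with hs_large | hs_small
  · have hempty : {x : Fin n → ℝ | ∑ i, (x i - μ i) ^ 2 < n * σ ^ 2 * (1 - 2 * s)} = ∅ := by
      refine Set.eq_empty_of_forall_notMem fun x => ?_
      rw [Set.mem_ofPred_eq, not_lt]
      exact (mul_nonpos_of_nonneg_of_nonpos (by positivity) (by linarith)).trans
        (Finset.sum_nonneg fun i _ => sq_nonneg _)
    rw [hempty, measureReal_empty]
    positivity
  have h1 : 0 < 1 - 2 * s := by linarith
  have hsub : {x : Fin n → ℝ | ∑ i, (x i - μ i) ^ 2 < n * σ ^ 2 * (1 - 2 * s)}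
      ⊆ {x | ∑ i, (x i - μ i) ^ 2 ≤ n * σ ^ 2 * (1 - 2 * s)} :=
    Set.ofPred_subset_ofPred.mpr fun _ => le_of_lt
  refine (measureReal_mono hsub).trans <|
    (isoGaussian_measureReal_sum_sq_le_le μ hσ (u := -(2 * s / (1 - 2 * s)))
      (by rw [neg_nonpos]; positivity) _).trans (exp_le_exp.mpr ?_)
  have hlog : log (1 - -(2 * s / (1 - 2 * s))) = -log (1 - 2 * s) := by
    rw [← log_inv]
    congr 1
    field_simp
    ring
  have hexponent : -(2 * s / (1 - 2 * s)) * (1 - 2 * s) = -(2 * s) := by field_simp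
  have hrate : 2 * s ^ 2 ≤ -(2 * s) - log (1 - 2 * s) := by
    nlinarith [log_one_sub_le_neg_sub_sq_div_two (by positivity : 0 ≤ 2 * s) hs_small]
  rw [hlog, hexponent]
  nlinarith [mul_le_mul_of_nonneg_left hrate (Nat.cast_nonneg n : (0 : ℝ) ≤ n)]

end isoGaussian

/-- Two-sided concentration for an isotropic Gaussian: for `x ~ N(μ, σ²·I)`, `r = √n·σ` and
`ε ≥ 0`, `P(r·√(1 - 2√ε) ≤ ‖x - μ‖ ≤ r·√(1 + 2√ε + 2ε)) ≥ 1 - 2e^(-nε)`.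
(`Real.sqrt` of a negative number is `0`, so the lower endpoint is interpreted as `0`
when `1 - 2√ε < 0`.) -/
theorem isoGaussian_concentration {n : ℕ} (μ : Fin n → ℝ) (σ : ℝ) (hσ : 0 < σ)
    (ε : ℝ) (hε : 0 ≤ ε) :
    ENNReal.ofReal (1 - 2 * Real.exp (-(n * ε)))
      ≤ isoGaussian n μ σ
          {x | Real.sqrt n * σ * Real.sqrt (1 - 2 * Real.sqrt ε)
                 ≤ Real.sqrt (∑ i, (x i - μ i) ^ 2) ∧
               Real.sqrt (∑ i, (x i - μ i) ^ 2)
                 ≤ Real.sqrt n * σ * Real.sqrt (1 + 2 * Real.sqrt ε + 2 * ε)} := by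
  obtain ⟨s, hs, rfl⟩ : ∃ s, 0 ≤ s ∧ s ^ 2 = ε := ⟨√ε, sqrt_nonneg ε, sq_sqrt hε⟩
  rw [sqrt_sq hs]
  set lower := {x : Fin n → ℝ | ∑ i, (x i - μ i) ^ 2 < n * σ ^ 2 * (1 - 2 * s)}
  set upper := {x : Fin n → ℝ | n * σ ^ 2 * (1 + 2 * s + 2 * s ^ 2) ≤ ∑ i, (x i - μ i) ^ 2}
  have hmeas : MeasurableSet (lower ∪ upper) :=
    (measurableSet_lt (by fun_prop) (by fun_prop)).union
      (measurableSet_le (by fun_prop) (by fun_prop))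
  have hscale : ∀ k, √n * σ * √k = √(n * σ ^ 2 * k) := fun k => by
    rw [sqrt_mul (by positivity), sqrt_mul (by positivity), sqrt_sq hσ.le]
  calc ENNReal.ofReal (1 - 2 * exp (-(n * s ^ 2)))
      ≤ ENNReal.ofReal ((isoGaussian n μ σ).real (lower ∪ upper)ᶜ) := by
        refine ENNReal.ofReal_le_ofReal ?_
        rw [probReal_compl_eq_one_sub hmeas]
        linarith [measureReal_union_le (μ := isoGaussian n μ σ) lower upper,
          isoGaussian_measureReal_sum_sq_lower_tail μ hσ.ne' hs,
          isoGaussian_measureReal_sum_sq_upper_tail μ hσ.ne' hs]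
    _ = isoGaussian n μ σ (lower ∪ upper)ᶜ := ofReal_measureReal
    _ ≤ _ := measure_mono fun x hx => ?_
  rw [Set.mem_compl_iff, Set.mem_union, not_or] at hx
  change _ ∧ _
  rw [hscale, hscale]
  exact ⟨sqrt_le_sqrt (not_lt.mp hx.1), sqrt_le_sqrt (not_le.mp hx.2).le⟩
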